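/- arXiv:2601.07026 — 2 statements merged into one kernel-verified Lean document; each statement's English description precedes it below -/
import Mathlib

section
/- Let g, r, d be integers and set α = r+1 and β = g−d+r, and let k = αβ − g (so that the Brill–Noether number ρ = g − (r+1)(g−d+r) equals −k). Assume α ≥ 2, β ≥ 2 and 1 ≤ k < min(α, β). Then there exists a filling F : {1,…,α} × {1,…,β} → {1,…,g} of the α×β rectangle such that: (i) F is strictly increasing in each coordinate (F(a,b) < F(a+1,b) and F(a,b) < F(a,b+1) whenever defined); (ii) F is surjective onto {1,…,g}; (iii) F(α,β) = g and F(α−l, β) = F(α, β−l) = g−l for every l = 1,…,k; (iv) each of the values g−1, g−2, …, g−k is attained at exactly the two positions listed in (iii), and every other value in {1,…,g} is attained at exactly one position. In particular, for each l the two occurrences of the value g−l are at grid distance |a₂−a₁| + |b₂−b₁| = 2l from each other. -/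
namespace AdmissibleFillingAux

/-- The explicit filling: interior cells in reading order with row length `β-1`,
the top of the last column continuing, and a hook of duplicated values
`G-k, …, G-1` at the ends of the last row and column, with `G` at `(α,β)`. -/
def fill (α β k G a b : ℕ) : ℕ :=
  if b = β then
    (if α ≤ a + k then G - (α - a) else (α-1)*(β-1) + (β - k - 1) + a)
  else if a = α ∧ β ≤ b + k then G - (β - b)
  else (a-1)*(β-1) + b

variable {α β k G : ℕ}

lemma fill_col (a : ℕ) (h : α ≤ a + k) : fill α β k G a β = G - (α - a) := by
  unfold fill; rw [if_pos rfl, if_pos h]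

lemma fill_coltop (a : ℕ) (h : a + k < α) :
    fill α β k G a β = (α-1)*(β-1) + (β - k - 1) + a := by
  unfold fill; rw [if_pos rfl, if_neg (by omega)]

lemma fill_row (b : ℕ) (h1 : b < β) (h2 : β ≤ b + k) :
    fill α β k G α b = G - (β - b) := by
  unfold fill; rw [if_neg (by omega), if_pos ⟨rfl, h2⟩]

lemma fill_int (a b : ℕ) (h1 : b < β) (h2 : ¬(a = α ∧ β ≤ b + k)) :
    fill α β k G a b = (a-1)*(β-1) + b := by
  unfold fill; rw [if_neg (by omega), if_neg h2]


lemma euclid_unique (B x y q r : ℕ) (hy : y < B) (hr : r < B)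
    (h : x * B + y = q * B + r) : x = q ∧ y = r := by
  rcases Nat.lt_trichotomy x q with h1 | h1 | h1
  · exfalso
    have h2 := Nat.mul_le_mul_right B (show x + 1 ≤ q from h1)
    have h3 : (x+1) * B = x*B + B := by ring
    omega
  · subst h1; omega
  · exfalso
    have h2 := Nat.mul_le_mul_right B (show q + 1 ≤ x from h1)
    have h3 : (q+1) * B = q*B + B := by ring
    omega

lemma euclid_exists {α β : ℕ} (n : ℕ) (hβ1 : 1 ≤ β - 1) (hn1 : 1 ≤ n)
    (hc1 : n ≤ (α-1)*(β-1)) :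
    ∃ q r, n - 1 = q * (β-1) + r ∧ r < β - 1 ∧ q + 2 ≤ α := by
  refine ⟨(n-1)/(β-1), (n-1) % (β-1), ?_, Nat.mod_lt _ hβ1, ?_⟩
  · have hdm := Nat.div_add_mod (n-1) (β-1)
    have hcm : (β-1) * ((n-1)/(β-1)) = (n-1)/(β-1) * (β-1) := Nat.mul_comm _ _
    omega
  · have h9 := (Nat.div_lt_iff_lt_mul hβ1).mpr (show n - 1 < (α-1)*(β-1) by omega)
    have h0 : 0 ≤ (n-1)/(β-1) := Nat.zero_le _
    omega

lemma fill_ids (hα2 : 2 ≤ α) (hβ2 : 2 ≤ β) (hk1 : 1 ≤ k) (hkα : k < α) (hkβ : k < β)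
    (hG : G + k = α * β) :
    (α-1)*(β-1) + α + β = G + k + 1 ∧
    (α-1)*(β-1) + (β - k - 1) + α = G ∧
    (α-2)*(β-1) + α + 2*β = G + k + 2 ∧
    (α-1)*(β-1) = (α-2)*(β-1) + (β-1) := by
  obtain ⟨s, hs⟩ : ∃ s, α = k + 1 + s := ⟨α - (k+1), by omega⟩
  obtain ⟨t, ht⟩ : ∃ t, β = k + 1 + t := ⟨β - (k+1), by omega⟩
  obtain ⟨K, hK⟩ : ∃ K, k = K + 1 := ⟨k - 1, by omega⟩
  have e1 : α - 1 = k + s := by omega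
  have e2 : β - 1 = k + t := by omega
  have e3 : α - 2 = K + s := by omega
  have hab : α * β = k*k + k*s + k*t + s*t + 2*k + s + t + 1 := by rw [hs, ht]; ring
  have h4 : (k+s)*(k+t) = k*k + k*s + k*t + s*t := by ring
  have h5 : (K+s)*(k+t) = K*k + K*t + k*s + s*t := by ring
  have h6 : K*k + k = k*k := by rw [hK]; ring
  have h7 : K*t + t = k*t := by rw [hK]; ring
  rw [e1, e2, e3]
  omega

lemma fill_char (hα2 : 2 ≤ α) (hβ2 : 2 ≤ β) (hk1 : 1 ≤ k) (hkα : k < α) (hkβ : k < β)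
    (hG : G + k = α * β) (a b : ℕ)
    (ha : 1 ≤ a) (haα : a ≤ α) (hb : 1 ≤ b) (hbβ : b ≤ β) :
    (b = β ∧ α ≤ a + k ∧ fill α β k G a b + (α - a) = G) ∨
    (b = β ∧ a + k < α ∧ fill α β k G a b + α = G + a) ∨
    (a = α ∧ b < β ∧ β ≤ b + k ∧ fill α β k G a b + (β - b) = G) ∨
    (b < β ∧ ¬(a = α ∧ β ≤ b + k) ∧ fill α β k G a b = (a-1)*(β-1) + b ∧
      fill α β k G a b + α ≤ G) := by
  obtain ⟨hidA, hidB, hid2, hconv⟩ := fill_ids hα2 hβ2 hk1 hkα hkβ hG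
  by_cases h1 : b = β
  · subst h1
    by_cases h2 : α ≤ a + k
    · exact Or.inl ⟨rfl, h2, by rw [fill_col a h2]; omega⟩
    · exact Or.inr (Or.inl ⟨rfl, by omega, by rw [fill_coltop a (by omega)]; omega⟩)
  · have hblt : b < β := by omega
    by_cases h2 : a = α ∧ β ≤ b + k
    · refine Or.inr (Or.inr (Or.inl ⟨h2.1, hblt, h2.2, ?_⟩))
      rw [h2.1, fill_row b hblt h2.2]; omega
    · refine Or.inr (Or.inr (Or.inr ⟨hblt, h2, fill_int a b hblt h2, ?_⟩))
      rw [fill_int a b hblt h2]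
      by_cases h3 : a = α
      · subst h3; omega
      · have hmm2 : (a-1)*(β-1) ≤ (α-2)*(β-1) := Nat.mul_le_mul_right _ (by omega)
        omega

lemma fill_bounds (hα2 : 2 ≤ α) (hβ2 : 2 ≤ β) (hk1 : 1 ≤ k) (hkα : k < α) (hkβ : k < β)
    (hG : G + k = α * β) (a b : ℕ)
    (ha : 1 ≤ a) (haα : a ≤ α) (hb : 1 ≤ b) (hbβ : b ≤ β) :
    1 ≤ fill α β k G a b ∧ fill α β k G a b ≤ G := by
  obtain ⟨hidA, hidB, hid2, hconv⟩ := fill_ids hα2 hβ2 hk1 hkα hkβ hG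
  rcases fill_char hα2 hβ2 hk1 hkα hkβ hG a b ha haα hb hbβ with
    ⟨_,h2,h3⟩|⟨_,h2,h3⟩|⟨_,_,h2,h3⟩|⟨_,_,h3,h4⟩ <;> omega

lemma fill_mono_col (hα2 : 2 ≤ α) (hβ2 : 2 ≤ β) (hk1 : 1 ≤ k) (hkα : k < α) (hkβ : k < β)
    (hG : G + k = α * β) (a b : ℕ)
    (ha : 1 ≤ a) (ha1 : a + 1 ≤ α) (hb : 1 ≤ b) (hbβ : b ≤ β) :
    fill α β k G a b < fill α β k G (a + 1) b := by
  obtain ⟨hidA, hidB, hid2, hconv⟩ := fill_ids hα2 hβ2 hk1 hkα hkβ hG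
  by_cases h1 : b = β
  · subst h1
    by_cases h2 : α ≤ a + k
    · rw [fill_col a h2, fill_col (a+1) (by omega)]; omega
    · by_cases h3 : α ≤ a + 1 + k
      · rw [fill_coltop a (by omega), fill_col (a+1) h3]; omega
      · rw [fill_coltop a (by omega), fill_coltop (a+1) (by omega)]; omega
  · have h1' : b < β := by omega
    by_cases h2 : a + 1 = α ∧ β ≤ b + k
    · obtain ⟨h2a, h2b⟩ := h2
      rw [fill_int a b h1' (by omega), h2a, fill_row b h1' h2b]
      have e : a - 1 = α - 2 := by omega
      rw [e]
      omega
    · rw [fill_int a b h1' (by omega), fill_int (a+1) b h1' (by omega)]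
      have e : a + 1 - 1 = a := by omega
      rw [e]
      have hsm : a * (β-1) ≤ (a-1)*(β-1) + (β-1) := by
        obtain ⟨c, rfl⟩ : ∃ c, a = c + 1 := ⟨a - 1, by omega⟩
        simp only [Nat.add_sub_cancel]
        have : (c+1) * (β-1) = c*(β-1) + (β-1) := by ring
        omega
      have hsm2 : (a-1)*(β-1) + 1 ≤ a * (β-1) := by
        obtain ⟨c, rfl⟩ : ∃ c, a = c + 1 := ⟨a - 1, by omega⟩
        simp only [Nat.add_sub_cancel]
        have : (c+1) * (β-1) = c*(β-1) + (β-1) := by ring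
        omega
      omega

lemma fill_mono_row (hα2 : 2 ≤ α) (hβ2 : 2 ≤ β) (hk1 : 1 ≤ k) (hkα : k < α) (hkβ : k < β)
    (hG : G + k = α * β) (a b : ℕ)
    (ha : 1 ≤ a) (haα : a ≤ α) (hb : 1 ≤ b) (hb1 : b + 1 ≤ β) :
    fill α β k G a b < fill α β k G a (b + 1) := by
  obtain ⟨hidA, hidB, hid2, hconv⟩ := fill_ids hα2 hβ2 hk1 hkα hkβ hG
  by_cases h1 : b + 1 = β
  · by_cases h2 : a = α
    · rw [h2, fill_row b (by omega) (by omega), h1, fill_col α (by omega)]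
      omega
    · rw [fill_int a b (by omega) (by omega), h1]
      have hsm : a * (β-1) = (a-1)*(β-1) + (β-1) := by
        obtain ⟨c, rfl⟩ : ∃ c, a = c + 1 := ⟨a - 1, by omega⟩
        simp only [Nat.add_sub_cancel]
        ring
      have hmm : a * (β-1) ≤ (α-1) * (β-1) := Nat.mul_le_mul_right _ (by omega)
      by_cases h3 : α ≤ a + k
      · rw [fill_col a h3]; omega
      · rw [fill_coltop a (by omega)]; omega
  · by_cases h2 : a = α ∧ β ≤ b + 1 + k
    · obtain ⟨rfl, h2b⟩ := h2
      rw [fill_row (b+1) (by omega) h2b]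
      by_cases h3 : β ≤ b + k
      · rw [fill_row b (by omega) h3]; omega
      · rw [fill_int a b (by omega) (by omega)]; omega
    · rw [fill_int a (b+1) (by omega) h2, fill_int a b (by omega) (by omega)]
      omega

lemma fill_surj (hα2 : 2 ≤ α) (hβ2 : 2 ≤ β) (hk1 : 1 ≤ k) (hkα : k < α) (hkβ : k < β)
    (hG : G + k = α * β) (n : ℕ) (hn1 : 1 ≤ n) (hnG : n ≤ G) :
    ∃ a b, 1 ≤ a ∧ a ≤ α ∧ 1 ≤ b ∧ b ≤ β ∧ fill α β k G a b = n := by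
  obtain ⟨hidA, hidB, hid2, hconv⟩ := fill_ids hα2 hβ2 hk1 hkα hkβ hG
  have hβ1 : 1 ≤ β - 1 := by omega
  by_cases hc1 : n ≤ (α-1)*(β-1)
  · obtain ⟨q, r, hqr, hr, hq⟩ := euclid_exists (α := α) n hβ1 hn1 hc1
    refine ⟨q + 1, r + 1, by omega, by omega, by omega, by omega, ?_⟩
    rw [fill_int _ _ (by omega) (by omega)]
    have e : q + 1 - 1 = q := by omega
    rw [e]
    omega
  · by_cases hc2 : n + α ≤ G
    · refine ⟨α, n - (α-1)*(β-1), by omega, le_rfl, by omega, by omega, ?_⟩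
      rw [fill_int α _ (by omega) (by omega)]
      omega
    · by_cases hc3 : n + k + 1 ≤ G
      · refine ⟨n + α - G, β, by omega, by omega, by omega, le_rfl, ?_⟩
        rw [fill_coltop _ (by omega)]
        omega
      · refine ⟨α - (G - n), β, by omega, by omega, by omega, le_rfl, ?_⟩
        rw [fill_col _ (by omega)]
        omega

lemma fill_two (hα2 : 2 ≤ α) (hβ2 : 2 ≤ β) (hk1 : 1 ≤ k) (hkα : k < α) (hkβ : k < β)
    (hG : G + k = α * β) (l : ℕ) (hl1 : 1 ≤ l) (hlk : l ≤ k) :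
    (Finset.Icc 1 α ×ˢ Finset.Icc 1 β).filter
      (fun p => fill α β k G p.1 p.2 = G - l) = {(α - l, β), (α, β - l)} := by
  obtain ⟨hidA, hidB, hid2, hconv⟩ := fill_ids hα2 hβ2 hk1 hkα hkβ hG
  ext ⟨a, b⟩
  simp only [Finset.mem_filter, Finset.mem_product, Finset.mem_Icc, Finset.mem_insert,
    Finset.mem_singleton, Prod.mk.injEq]
  constructor
  · rintro ⟨⟨⟨ha1, ha2⟩, hb1, hb2⟩, hvn⟩
    rcases fill_char hα2 hβ2 hk1 hkα hkβ hG a b ha1 ha2 hb1 hb2 with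
      ⟨hbβ, h2, h3⟩|⟨hbβ, h2, h3⟩|⟨haα, hblt, h2, h3⟩|⟨hblt, h2, h3, h4⟩
    · exact Or.inl ⟨by omega, hbβ⟩
    · omega
    · exact Or.inr ⟨haα, by omega⟩
    · omega
  · rintro (⟨rfl, rfl⟩ | ⟨rfl, rfl⟩)
    · refine ⟨⟨⟨by omega, by omega⟩, by omega, by omega⟩, ?_⟩
      rw [fill_col (α - l) (by omega)]; omega
    · refine ⟨⟨⟨by omega, by omega⟩, by omega, by omega⟩, ?_⟩
      rw [fill_row (β - l) (by omega) (by omega)]; omega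

lemma fill_one (hα2 : 2 ≤ α) (hβ2 : 2 ≤ β) (hk1 : 1 ≤ k) (hkα : k < α) (hkβ : k < β)
    (hG : G + k = α * β) (n : ℕ) (hn1 : 1 ≤ n) (hcases : n + k + 1 ≤ G ∨ n = G) :
    ∃ pt : ℕ × ℕ, (Finset.Icc 1 α ×ˢ Finset.Icc 1 β).filter
      (fun p => fill α β k G p.1 p.2 = n) = {pt} := by
  obtain ⟨hidA, hidB, hid2, hconv⟩ := fill_ids hα2 hβ2 hk1 hkα hkβ hG
  have hβ1 : 1 ≤ β - 1 := by omega
  have hmem : ∀ a b : ℕ, ((a, b) ∈ (Finset.Icc 1 α ×ˢ Finset.Icc 1 β).filter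
      (fun p => fill α β k G p.1 p.2 = n)) ↔
      (1 ≤ a ∧ a ≤ α ∧ 1 ≤ b ∧ b ≤ β ∧ fill α β k G a b = n) := by
    intro a b
    simp only [Finset.mem_filter, Finset.mem_product, Finset.mem_Icc]
    tauto
  rcases hcases with hc0 | hc0
  · by_cases hc1 : n ≤ (α-1)*(β-1)
    · obtain ⟨q, r, hqr, hr, hq⟩ := euclid_exists (α := α) n hβ1 hn1 hc1
      refine ⟨(q + 1, r + 1), ?_⟩
      ext ⟨a, b⟩
      rw [hmem, Finset.mem_singleton, Prod.mk.injEq]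
      constructor
      · rintro ⟨ha1, ha2, hb1, hb2, hv⟩
        rcases fill_char hα2 hβ2 hk1 hkα hkβ hG a b ha1 ha2 hb1 hb2 with
          ⟨hbβ, h2, h3⟩|⟨hbβ, h2, h3⟩|⟨haα, hblt, h2, h3⟩|⟨hblt, h2, h3, h4⟩
        · omega
        · omega
        · omega
        · have hdu : a - 1 = q ∧ b - 1 = r :=
            euclid_unique (β-1) (a-1) (b-1) q r (by omega) hr (by omega)
          omega
      · rintro ⟨ha', hb'⟩
        refine ⟨by omega, by omega, by omega, by omega, ?_⟩
        rw [ha', hb', fill_int _ _ (by omega) (by omega)]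
        have e : q + 1 - 1 = q := by omega
        rw [e]
        omega
    · by_cases hc2 : n + α ≤ G
      · refine ⟨(α, n - (α-1)*(β-1)), ?_⟩
        ext ⟨a, b⟩
        rw [hmem, Finset.mem_singleton, Prod.mk.injEq]
        constructor
        · rintro ⟨ha1, ha2, hb1, hb2, hv⟩
          rcases fill_char hα2 hβ2 hk1 hkα hkβ hG a b ha1 ha2 hb1 hb2 with
            ⟨hbβ, h2, h3⟩|⟨hbβ, h2, h3⟩|⟨haα, hblt, h2, h3⟩|⟨hblt, h2, h3, h4⟩
          · omega
          · omega
          · omega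
          · by_cases haα : a = α
            · subst haα; omega
            · have hmm2 : (a-1)*(β-1) ≤ (α-2)*(β-1) := Nat.mul_le_mul_right _ (by omega)
              omega
        · rintro ⟨ha', hb'⟩
          refine ⟨by omega, by omega, by omega, by omega, ?_⟩
          rw [ha', hb', fill_int α _ (by omega) (by omega)]
          omega
      · refine ⟨(n + α - G, β), ?_⟩
        ext ⟨a, b⟩
        rw [hmem, Finset.mem_singleton, Prod.mk.injEq]
        constructor
        · rintro ⟨ha1, ha2, hb1, hb2, hv⟩
          rcases fill_char hα2 hβ2 hk1 hkα hkβ hG a b ha1 ha2 hb1 hb2 with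
            ⟨hbβ, h2, h3⟩|⟨hbβ, h2, h3⟩|⟨haα, hblt, h2, h3⟩|⟨hblt, h2, h3, h4⟩
          · omega
          · omega
          · omega
          · omega
        · rintro ⟨ha', hb'⟩
          refine ⟨by omega, by omega, by omega, by omega, ?_⟩
          rw [ha', hb', fill_coltop _ (by omega)]
          omega
  · refine ⟨(α, β), ?_⟩
    ext ⟨a, b⟩
    rw [hmem, Finset.mem_singleton, Prod.mk.injEq]
    constructor
    · rintro ⟨ha1, ha2, hb1, hb2, hv⟩
      rcases fill_char hα2 hβ2 hk1 hkα hkβ hG a b ha1 ha2 hb1 hb2 with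
        ⟨hbβ, h2, h3⟩|⟨hbβ, h2, h3⟩|⟨haα, hblt, h2, h3⟩|⟨hblt, h2, h3, h4⟩
      · omega
      · omega
      · omega
      · omega
    · rintro ⟨ha', hb'⟩
      refine ⟨by omega, by omega, by omega, by omega, ?_⟩
      rw [ha', hb', fill_col α (by omega)]
      omega

end AdmissibleFillingAux

set_option maxHeartbeats 4000000 in
/-- Existence of an admissible filling of the `α × β` rectangle
(`α = r+1`, `β = g-d+r`, `k = αβ - g = -ρ`) with strictly increasing rows and
columns, surjective onto `{1,…,g}`, with `F(α,β) = g`, the values `g-l`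
(`l = 1,…,k`) appearing exactly at the two spots `(α-l, β)` and `(α, β-l)`,
every other value appearing exactly once; in particular the two spots carrying
a repeated value `g-l` are at grid distance `2l`. -/
theorem exists_admissible_filling
    (g r d : ℤ) (α β k : ℕ)
    (hα : (α : ℤ) = r + 1) (hβ : (β : ℤ) = g - d + r)
    (hk : (k : ℤ) = (α : ℤ) * (β : ℤ) - g)
    (hα2 : 2 ≤ α) (hβ2 : 2 ≤ β)
    (hk1 : 1 ≤ k) (hkα : k < α) (hkβ : k < β) :
    ∃ F : ℕ → ℕ → ℕ,
      -- values lie in {1,…,g}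
      (∀ a b, 1 ≤ a → a ≤ α → 1 ≤ b → b ≤ β → 1 ≤ F a b ∧ (F a b : ℤ) ≤ g) ∧
      -- (i) strictly increasing along columns (in the first coordinate)
      (∀ a b, 1 ≤ a → a + 1 ≤ α → 1 ≤ b → b ≤ β → F a b < F (a + 1) b) ∧
      -- (i) strictly increasing along rows (in the second coordinate)
      (∀ a b, 1 ≤ a → a ≤ α → 1 ≤ b → b + 1 ≤ β → F a b < F a (b + 1)) ∧
      -- (ii) surjective onto {1,…,g}
      (∀ m : ℤ, 1 ≤ m → m ≤ g →
        ∃ a b, 1 ≤ a ∧ a ≤ α ∧ 1 ≤ b ∧ b ≤ β ∧ (F a b : ℤ) = m) ∧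
      -- (iii) prescribed values at the end of the last row and column
      ((F α β : ℤ) = g) ∧
      (∀ l : ℕ, 1 ≤ l → l ≤ k →
        (F (α - l) β : ℤ) = g - l ∧ (F α (β - l) : ℤ) = g - l) ∧
      -- (iv) each value g-l (1 ≤ l ≤ k) is attained at exactly two positions
      (∀ l : ℕ, 1 ≤ l → l ≤ k →
        ((Finset.Icc 1 α ×ˢ Finset.Icc 1 β).filter
          (fun p => (F p.1 p.2 : ℤ) = g - l)).card = 2) ∧
      -- (iv) every other value in {1,…,g} is attained at exactly one position
      (∀ m : ℤ, 1 ≤ m → m ≤ g → (∀ l : ℕ, 1 ≤ l → l ≤ k → m ≠ g - l) →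
        ((Finset.Icc 1 α ×ˢ Finset.Icc 1 β).filter
          (fun p => (F p.1 p.2 : ℤ) = m)).card = 1) ∧
      -- in particular: the two occurrences of g-l are at grid distance 2l
      (∀ l : ℕ, 1 ≤ l → l ≤ k →
        (α - (α - l)) + (β - (β - l)) = 2 * l) := by
  obtain ⟨G, hGdef⟩ : ∃ G : ℕ, G = α * β - k := ⟨_, rfl⟩
  have hαβ : α ≤ α * β := Nat.le_mul_of_pos_right α (by omega)
  have hG : G + k = α * β := by omega
  have hGg : (G : ℤ) = g := by
    have h1 : ((α * β : ℕ) : ℤ) = (α : ℤ) * (β : ℤ) := by push_cast; ring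
    omega
  have hGk : k + 1 ≤ G := by
    obtain ⟨hidA, hidB, _, _⟩ := AdmissibleFillingAux.fill_ids hα2 hβ2 hk1 hkα hkβ hG
    omega
  refine ⟨AdmissibleFillingAux.fill α β k G, ?_, ?_, ?_, ?_, ?_, ?_, ?_, ?_, ?_⟩
  · intro a b ha haα hb hbβ
    have h := AdmissibleFillingAux.fill_bounds hα2 hβ2 hk1 hkα hkβ hG a b ha haα hb hbβ
    exact ⟨h.1, by omega⟩
  · intro a b ha ha1 hb hbβ
    exact AdmissibleFillingAux.fill_mono_col hα2 hβ2 hk1 hkα hkβ hG a b ha ha1 hb hbβ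
  · intro a b ha haα hb hb1
    exact AdmissibleFillingAux.fill_mono_row hα2 hβ2 hk1 hkα hkβ hG a b ha haα hb hb1
  · intro m hm1 hmg
    obtain ⟨n, hnm, hn1, hnG⟩ : ∃ n : ℕ, (n:ℤ) = m ∧ 1 ≤ n ∧ n ≤ G :=
      ⟨m.toNat, by omega, by omega, by omega⟩
    obtain ⟨a, b, h1, h2, h3, h4, h5⟩ :=
      AdmissibleFillingAux.fill_surj hα2 hβ2 hk1 hkα hkβ hG n hn1 hnG
    exact ⟨a, b, h1, h2, h3, h4, by omega⟩
  · rw [AdmissibleFillingAux.fill_col α (by omega)]; omega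
  · intro l hl1 hlk
    constructor
    · rw [AdmissibleFillingAux.fill_col (α - l) (by omega)]; omega
    · rw [AdmissibleFillingAux.fill_row (β - l) (by omega) (by omega)]; omega
  · intro l hl1 hlk
    have hconv : (Finset.Icc 1 α ×ˢ Finset.Icc 1 β).filter
        (fun p => (AdmissibleFillingAux.fill α β k G p.1 p.2 : ℤ) = g - l) =
        (Finset.Icc 1 α ×ˢ Finset.Icc 1 β).filter
        (fun p => AdmissibleFillingAux.fill α β k G p.1 p.2 = G - l) :=
      Finset.filter_congr (fun p _ => by constructor <;> intro h <;> omega)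
    rw [hconv, AdmissibleFillingAux.fill_two hα2 hβ2 hk1 hkα hkβ hG l hl1 hlk]
    rw [Finset.card_insert_of_notMem
      (by simp only [Finset.mem_singleton, Prod.mk.injEq]; omega), Finset.card_singleton]
  · intro m hm1 hmg hne
    obtain ⟨n, hnm, hn1, hnG⟩ : ∃ n : ℕ, (n:ℤ) = m ∧ 1 ≤ n ∧ n ≤ G :=
      ⟨m.toNat, by omega, by omega, by omega⟩
    have hcases : n + k + 1 ≤ G ∨ n = G := by
      by_contra hcon
      push_neg at hcon
      obtain ⟨h1, h2⟩ := hcon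
      have h3 := hne (G - n) (by omega) (by omega)
      omega
    obtain ⟨pt, hpt⟩ := AdmissibleFillingAux.fill_one hα2 hβ2 hk1 hkα hkβ hG n hn1 hcases
    have hconv : (Finset.Icc 1 α ×ˢ Finset.Icc 1 β).filter
        (fun p => (AdmissibleFillingAux.fill α β k G p.1 p.2 : ℤ) = m) =
        (Finset.Icc 1 α ×ˢ Finset.Icc 1 β).filter
        (fun p => AdmissibleFillingAux.fill α β k G p.1 p.2 = n) :=
      Finset.filter_congr (fun p _ => by constructor <;> intro h <;> omega)
    rw [hconv, hpt, Finset.card_singleton]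
  · intro l hl1 hlk
    omega
end

section
/- Let α = r+1, β = g−d+r, k = αβ−g with α, β ≥ 2 and 1 ≤ k < min(α,β), and let F : {1,…,α} × {1,…,β} → {1,…,g} be any filling that is strictly increasing in each coordinate, is surjective, satisfies F(α,β) = g and F(α−l,β) = F(α,β−l) = g−l for l = 1,…,k, attains each value g−1,…,g−k at exactly those two positions and every other value at exactly one position. For an integer m, define the signed grid distance of a position (a,b) to the sublevel set {F ≤ m} as D_m(a,b) = (a − #{a' : F(a',b) ≤ m}) + (b − #{b' : F(a,b') ≤ m}). Then for every l ∈ {1,…,k} and every integer m with g−k−1 ≤ m ≤ g, one has D_m(α−l, β) = D_m(α, β−l); that is, the two positions carrying the repeated index g−l are at equal signed grid distance from the broken line bounding the region filled by indices at most m. -/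
private lemma chainLt (f : ℕ → ℕ) (lo hi : ℕ)
    (h : ∀ a, lo ≤ a → a + 1 ≤ hi → f a < f (a + 1)) :
    ∀ a a', lo ≤ a → a < a' → a' ≤ hi → f a < f a' := by
  intro a a'
  induction a' with
  | zero => intro _ h2 _; omega
  | succ n ih =>
    intro ha hlt hle
    rcases Nat.lt_or_ge a n with h1 | h1
    · exact lt_trans (ih ha h1 (by omega)) (h n (by omega) hle)
    · have han : a = n := by omega
      subst han
      exact h a ha hle

private lemma chainLe (f : ℕ → ℕ) (lo hi : ℕ)
    (h : ∀ a, lo ≤ a → a + 1 ≤ hi → f a < f (a + 1)) :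
    ∀ a a', lo ≤ a → a ≤ a' → a' ≤ hi → f a ≤ f a' := by
  intro a a' ha hle hhi
  rcases eq_or_lt_of_le hle with rfl | hlt
  · exact le_rfl
  · exact le_of_lt (chainLt f lo hi h a a' ha hlt hhi)

/-- The signed grid distance of the spot `(a,b)` to the broken line bounding the
sublevel region `{F ≤ m}` of an `α × β` rectangle:
`D_m(a,b) = (a − #{a' : F(a',b) ≤ m}) + (b − #{b' : F(a,b') ≤ m})`. -/
def signedGridDist (α β : ℕ) (F : ℕ → ℕ → ℕ) (m : ℤ) (a b : ℕ) : ℤ :=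
  ((a : ℤ) - (((Finset.Icc 1 α).filter (fun a' => (F a' b : ℤ) ≤ m)).card : ℤ))
    + ((b : ℤ) - (((Finset.Icc 1 β).filter (fun b' => (F a b' : ℤ) ≤ m)).card : ℤ))

/-- For an admissible filling as in the construction
(`α = r+1`, `β = g-d+r`, `k = αβ - g`, strictly increasing rows and columns,
surjective onto `{1,…,g}`, `F(α,β) = g`, `F(α-l,β) = F(α,β-l) = g-l` with those
values attained exactly twice and all other values exactly once), the two
positions carrying the repeated index `g-l` are at equal signed grid distance
from the broken line for every threshold `m` with `g-k-1 ≤ m ≤ g`. -/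
theorem signedGridDist_eq_of_repeated_index
    (g r d : ℤ) (α β k : ℕ)
    (hα : (α : ℤ) = r + 1) (hβ : (β : ℤ) = g - d + r)
    (hk : (k : ℤ) = (α : ℤ) * (β : ℤ) - g)
    (hα2 : 2 ≤ α) (hβ2 : 2 ≤ β)
    (hk1 : 1 ≤ k) (hkα : k < α) (hkβ : k < β)
    (F : ℕ → ℕ → ℕ)
    (hvals : ∀ a b, 1 ≤ a → a ≤ α → 1 ≤ b → b ≤ β → 1 ≤ F a b ∧ (F a b : ℤ) ≤ g)
    (hrow : ∀ a b, 1 ≤ a → a + 1 ≤ α → 1 ≤ b → b ≤ β → F a b < F (a + 1) b)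
    (hcol : ∀ a b, 1 ≤ a → a ≤ α → 1 ≤ b → b + 1 ≤ β → F a b < F a (b + 1))
    (hsurj : ∀ m : ℤ, 1 ≤ m → m ≤ g →
      ∃ a b, 1 ≤ a ∧ a ≤ α ∧ 1 ≤ b ∧ b ≤ β ∧ (F a b : ℤ) = m)
    (hcorner : (F α β : ℤ) = g)
    (hdouble : ∀ l : ℕ, 1 ≤ l → l ≤ k →
      (F (α - l) β : ℤ) = g - l ∧ (F α (β - l) : ℤ) = g - l)
    (hcard2 : ∀ l : ℕ, 1 ≤ l → l ≤ k →
      ((Finset.Icc 1 α ×ˢ Finset.Icc 1 β).filter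
        (fun p => (F p.1 p.2 : ℤ) = g - l)).card = 2)
    (hcard1 : ∀ m : ℤ, 1 ≤ m → m ≤ g → (∀ l : ℕ, 1 ≤ l → l ≤ k → m ≠ g - l) →
      ((Finset.Icc 1 α ×ˢ Finset.Icc 1 β).filter
        (fun p => (F p.1 p.2 : ℤ) = m)).card = 1)
    (l : ℕ) (hl1 : 1 ≤ l) (hlk : l ≤ k)
    (m : ℤ) (hm1 : g - k - 1 ≤ m) (hm2 : m ≤ g) :
    signedGridDist α β F m (α - l) β = signedGridDist α β F m α (β - l) := by
  have h1g : (1:ℤ) ≤ g := by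
    have h := (hvals α β (by omega) le_rfl (by omega) le_rfl).1
    have h' : (1:ℤ) ≤ (F α β : ℤ) := by exact_mod_cast h
    omega
  have hval_col : ∀ t' : ℕ, t' ≤ k → (F (α - t') β : ℤ) = g - t' := by
    intro t' ht'
    rcases Nat.eq_zero_or_pos t' with h | h
    · subst h; simpa using hcorner
    · exact (hdouble t' h ht').1
  have hval_row : ∀ t' : ℕ, t' ≤ k → (F α (β - t') : ℤ) = g - t' := by
    intro t' ht'
    rcases Nat.eq_zero_or_pos t' with h | h
    · subst h; simpa using hcorner
    · exact (hdouble t' h ht').2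
  have hrowLt : ∀ b, 1 ≤ b → b ≤ β → ∀ a a', 1 ≤ a → a < a' → a' ≤ α → F a b < F a' b :=
    fun b hb1 hb2 => chainLt (fun a => F a b) 1 α (fun a ha hale => hrow a b ha hale hb1 hb2)
  have hcolLt : ∀ a, 1 ≤ a → a ≤ α → ∀ b b', 1 ≤ b → b < b' → b' ≤ β → F a b < F a b' :=
    fun a ha1 ha2 => chainLt (fun b => F a b) 1 β (fun b hb hble => hcol a b ha1 ha2 hb hble)
  have hrowLe : ∀ b, 1 ≤ b → b ≤ β → ∀ a a', 1 ≤ a → a ≤ a' → a' ≤ α → F a b ≤ F a' b :=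
    fun b hb1 hb2 => chainLe (fun a => F a b) 1 α (fun a ha hale => hrow a b ha hale hb1 hb2)
  have hcolLe : ∀ a, 1 ≤ a → a ≤ α → ∀ b b', 1 ≤ b → b ≤ b' → b' ≤ β → F a b ≤ F a b' :=
    fun a ha1 ha2 => chainLe (fun b => F a b) 1 β (fun b hb hble => hcol a b ha1 ha2 hb hble)
  -- Total number of cells carrying a value ≥ g - k equals 2k + 1.
  have hTcard : ((Finset.Icc 1 α ×ˢ Finset.Icc 1 β).filter
      (fun p => g - (k:ℤ) ≤ (F p.1 p.2 : ℤ))).card = 2*k+1 := by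
    set S := Finset.Icc 1 α ×ˢ Finset.Icc 1 β with hSdef
    set T := S.filter (fun p => g - (k:ℤ) ≤ (F p.1 p.2 : ℤ)) with hTdef
    have hmapsto : ∀ p ∈ T, (F p.1 p.2 : ℤ) ∈ Finset.Icc (g - (k:ℤ)) g := by
      intro p hp
      rw [hTdef, Finset.mem_filter] at hp
      obtain ⟨hpS, hpk⟩ := hp
      rw [hSdef, Finset.mem_product, Finset.mem_Icc, Finset.mem_Icc] at hpS
      have hv := hvals p.1 p.2 hpS.1.1 hpS.1.2 hpS.2.1 hpS.2.2
      rw [Finset.mem_Icc]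
      exact ⟨hpk, hv.2⟩
    rw [Finset.card_eq_sum_card_fiberwise hmapsto]
    have hfib : ∀ v ∈ Finset.Icc (g - (k:ℤ)) g,
        (T.filter (fun p => (F p.1 p.2 : ℤ) = v)).card = if v = g then 1 else 2 := by
      intro v hv
      rw [Finset.mem_Icc] at hv
      have hTf : T.filter (fun p => (F p.1 p.2 : ℤ) = v)
          = S.filter (fun p => (F p.1 p.2 : ℤ) = v) := by
        rw [hTdef, Finset.filter_filter]
        apply Finset.filter_congr
        intro p _
        constructor
        · exact fun h => h.2
        · intro h
          exact ⟨by rw [h]; exact hv.1, h⟩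
      rw [hTf]
      split_ifs with hvg
      · rw [hvg]
        exact hcard1 g h1g le_rfl (fun l' hl1' hl2' => by omega)
      · have hl1' : 1 ≤ (g-v).toNat := by omega
        have hl2' : (g-v).toNat ≤ k := by omega
        have hc := hcard2 (g-v).toNat hl1' hl2'
        have hveq : g - ((g-v).toNat : ℤ) = v := by omega
        rw [hveq] at hc
        exact hc
    rw [Finset.sum_congr rfl hfib]
    rw [show Finset.Icc (g-(k:ℤ)) g = insert g (Finset.Icc (g-(k:ℤ)) (g-1)) by
      ext v; simp only [Finset.mem_Icc, Finset.mem_insert]; omega]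
    rw [Finset.sum_insert (by simp only [Finset.mem_Icc]; omega)]
    rw [if_pos rfl]
    rw [Finset.sum_congr rfl (fun v hv => if_neg (by
      simp only [Finset.mem_Icc] at hv; omega))]
    rw [Finset.sum_const, Int.card_Icc]
    simp only [smul_eq_mul]
    omega
  -- The interior corner carries a value at most g - k - 1.
  have hInt : (F (α-1) (β-1) : ℤ) ≤ g - (k:ℤ) - 1 := by
    by_contra hc
    push_neg at hc
    have hmem : ∀ j ∈ Finset.range (2*k+2),
        (if j ≤ k then (α, β - j) else if j ≤ 2*k then (α - (j-k), β) else (α-1, β-1))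
          ∈ (Finset.Icc 1 α ×ˢ Finset.Icc 1 β).filter
              (fun p => g - (k:ℤ) ≤ (F p.1 p.2 : ℤ)) := by
      intro j hj
      rw [Finset.mem_range] at hj
      split_ifs with h1 h2
      · simp only [Finset.mem_filter, Finset.mem_product, Finset.mem_Icc]
        refine ⟨⟨⟨by omega, le_rfl⟩, ⟨by omega, by omega⟩⟩, ?_⟩
        have hv := hval_row j (by omega)
        omega
      · simp only [Finset.mem_filter, Finset.mem_product, Finset.mem_Icc]
        refine ⟨⟨⟨by omega, by omega⟩, ⟨by omega, le_rfl⟩⟩, ?_⟩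
        have hv := hval_col (j - k) (by omega)
        omega
      · simp only [Finset.mem_filter, Finset.mem_product, Finset.mem_Icc]
        refine ⟨⟨⟨by omega, by omega⟩, ⟨by omega, by omega⟩⟩, by omega⟩
    have hinj : Set.InjOn
        (fun j => if j ≤ k then (α, β - j) else if j ≤ 2*k then (α - (j-k), β)
          else (α-1, β-1)) (Finset.range (2*k+2)) := by
      intro i hi j hj hij
      simp only [Finset.coe_range, Set.mem_Iio] at hi hj
      simp only at hij
      split_ifs at hij <;> simp only [Prod.mk.injEq] at hij <;> omega
    have hcard := Finset.card_le_card_of_injOn _ hmem hinj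
    rw [Finset.card_range, hTcard] at hcard
    omega
  -- The threshold parameter
  set t := (g - m).toNat with ht
  have htZ : (t:ℤ) = g - m := Int.toNat_of_nonneg (by omega)
  have htk : t ≤ k + 1 := by omega
  -- Column β filter
  have hc1 : ((Finset.Icc 1 α).filter (fun a' => (F a' β : ℤ) ≤ m)).card = α - t := by
    have hfe : (Finset.Icc 1 α).filter (fun a' => (F a' β : ℤ) ≤ m)
        = Finset.Icc 1 (α - t) := by
      ext a'
      simp only [Finset.mem_filter, Finset.mem_Icc]
      constructor
      · rintro ⟨⟨ha1, ha2⟩, hFa⟩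
        refine ⟨ha1, ?_⟩
        by_contra hcon
        push_neg at hcon
        have hv := hval_col (α - a') (by omega)
        rw [show α - (α - a') = a' from by omega] at hv
        omega
      · rintro ⟨ha1, ha2⟩
        refine ⟨⟨ha1, by omega⟩, ?_⟩
        rcases Nat.lt_or_ge a' (α - k) with hcase | hcase
        · have hlt := hrowLt β (by omega) le_rfl a' (α - k) ha1 hcase (by omega)
          have hv := hval_col k le_rfl
          have hlt' : (F a' β : ℤ) < (F (α - k) β : ℤ) := by exact_mod_cast hlt
          omega
        · have hv := hval_col (α - a') (by omega)
          rw [show α - (α - a') = a' from by omega] at hv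
          omega
    rw [hfe, Nat.card_Icc]
    omega
  -- Row α filter
  have hc4 : ((Finset.Icc 1 β).filter (fun b' => (F α b' : ℤ) ≤ m)).card = β - t := by
    have hfe : (Finset.Icc 1 β).filter (fun b' => (F α b' : ℤ) ≤ m)
        = Finset.Icc 1 (β - t) := by
      ext b'
      simp only [Finset.mem_filter, Finset.mem_Icc]
      constructor
      · rintro ⟨⟨hb1, hb2⟩, hFb⟩
        refine ⟨hb1, ?_⟩
        by_contra hcon
        push_neg at hcon
        have hv := hval_row (β - b') (by omega)
        rw [show β - (β - b') = b' from by omega] at hv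
        omega
      · rintro ⟨hb1, hb2⟩
        refine ⟨⟨hb1, by omega⟩, ?_⟩
        rcases Nat.lt_or_ge b' (β - k) with hcase | hcase
        · have hlt := hcolLt α (by omega) le_rfl b' (β - k) hb1 hcase (by omega)
          have hv := hval_row k le_rfl
          have hlt' : (F α b' : ℤ) < (F α (β - k) : ℤ) := by exact_mod_cast hlt
          omega
        · have hv := hval_row (β - b') (by omega)
          rw [show β - (β - b') = b' from by omega] at hv
          omega
    rw [hfe, Nat.card_Icc]
    omega
  -- interior smallness along row α - l
  have hrow_small : ∀ b', 1 ≤ b' → b' ≤ β - 1 → (F (α - l) b' : ℤ) ≤ m := by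
    intro b' h1 h2
    have e1 : F (α - l) b' ≤ F (α - l) (β - 1) :=
      hcolLe (α - l) (by omega) (by omega) b' (β - 1) h1 h2 (by omega)
    have e2 : F (α - l) (β - 1) ≤ F (α - 1) (β - 1) :=
      hrowLe (β - 1) (by omega) (by omega) (α - l) (α - 1) (by omega) (by omega) (by omega)
    have e3 : (F (α - l) b' : ℤ) ≤ (F (α - 1) (β - 1) : ℤ) := by
      exact_mod_cast le_trans e1 e2
    omega
  have hcol_small : ∀ a', 1 ≤ a' → a' ≤ α - 1 → (F a' (β - l) : ℤ) ≤ m := by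
    intro a' h1 h2
    have e1 : F a' (β - l) ≤ F (α - 1) (β - l) :=
      hrowLe (β - l) (by omega) (by omega) a' (α - 1) h1 h2 (by omega)
    have e2 : F (α - 1) (β - l) ≤ F (α - 1) (β - 1) :=
      hcolLe (α - 1) (by omega) (by omega) (β - l) (β - 1) (by omega) (by omega) (by omega)
    have e3 : (F a' (β - l) : ℤ) ≤ (F (α - 1) (β - 1) : ℤ) := by
      exact_mod_cast le_trans e1 e2
    omega
  have hgl1 : (F (α - l) β : ℤ) = g - l := (hdouble l hl1 hlk).1
  have hgl2 : (F α (β - l) : ℤ) = g - l := (hdouble l hl1 hlk).2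
  -- Row α - l filter
  have hc2 : ((Finset.Icc 1 β).filter (fun b' => (F (α - l) b' : ℤ) ≤ m)).card
      = if g - (l:ℤ) ≤ m then β else β - 1 := by
    split_ifs with hcond
    · have hft : (Finset.Icc 1 β).filter (fun b' => (F (α - l) b' : ℤ) ≤ m)
          = Finset.Icc 1 β := by
        apply Finset.filter_true_of_mem
        intro b' hb'
        rw [Finset.mem_Icc] at hb'
        rcases Nat.lt_or_ge b' β with hb | hb
        · exact hrow_small b' hb'.1 (by omega)
        · have : b' = β := by omega
          rw [this, hgl1]; exact hcond
      rw [hft, Nat.card_Icc]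
      omega
    · have hfe : (Finset.Icc 1 β).filter (fun b' => (F (α - l) b' : ℤ) ≤ m)
          = Finset.Icc 1 (β - 1) := by
        ext b'
        simp only [Finset.mem_filter, Finset.mem_Icc]
        constructor
        · rintro ⟨⟨hb1, hb2⟩, hFb⟩
          refine ⟨hb1, ?_⟩
          by_contra hcon
          push_neg at hcon
          have : b' = β := by omega
          rw [this, hgl1] at hFb
          exact hcond hFb
        · rintro ⟨hb1, hb2⟩
          exact ⟨⟨hb1, by omega⟩, hrow_small b' hb1 hb2⟩
      rw [hfe, Nat.card_Icc]
      omega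
  -- Column β - l filter
  have hc3 : ((Finset.Icc 1 α).filter (fun a' => (F a' (β - l) : ℤ) ≤ m)).card
      = if g - (l:ℤ) ≤ m then α else α - 1 := by
    split_ifs with hcond
    · have hft : (Finset.Icc 1 α).filter (fun a' => (F a' (β - l) : ℤ) ≤ m)
          = Finset.Icc 1 α := by
        apply Finset.filter_true_of_mem
        intro a' ha'
        rw [Finset.mem_Icc] at ha'
        rcases Nat.lt_or_ge a' α with haa | haa
        · exact hcol_small a' ha'.1 (by omega)
        · have : a' = α := by omega
          rw [this, hgl2]; exact hcond
      rw [hft, Nat.card_Icc]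
      omega
    · have hfe : (Finset.Icc 1 α).filter (fun a' => (F a' (β - l) : ℤ) ≤ m)
          = Finset.Icc 1 (α - 1) := by
        ext a'
        simp only [Finset.mem_filter, Finset.mem_Icc]
        constructor
        · rintro ⟨⟨ha1, ha2⟩, hFa⟩
          refine ⟨ha1, ?_⟩
          by_contra hcon
          push_neg at hcon
          have : a' = α := by omega
          rw [this, hgl2] at hFa
          exact hcond hFa
        · rintro ⟨ha1, ha2⟩
          exact ⟨⟨ha1, by omega⟩, hcol_small a' ha1 ha2⟩
      rw [hfe, Nat.card_Icc]
      omega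
  rw [signedGridDist, signedGridDist, hc1, hc2, hc3, hc4]
  split_ifs with hcond <;> omega
end
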